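/- Suppose a,b: [0,T] → [0,∞) are absolutely continuous and A,B: [0,T] → [0,∞) are integrable with a ≤ A and b ≤ B pointwise, satisfying a' + A ≤ C + C₁B and b' + B ≤ C + C₁α²A a.e. on [0,T], with periodic boundary conditions a(0)=a(T), b(0)=b(T). If 2C₁²α² ≤ 1/8, then the function f = a + 2C₁b satisfies f' + (1/8)f + (1/2)(A−a) + C₁(B−b) ≤ C(1+2C₁) a.e., and consequently sup_{s∈[0,T]} f(s) ≤ 8C(1+2C₁) and ∫₀ᵀ (A+B) ds ≤ C' for an explicit constant C' depending only on C, C₁, T. -/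

import Mathlib

open Real Set intervalIntegral

/-!
Adding `2C₁` times the inequality for `b` to the one for `a`, the smallness `2C₁²α² ≤ 1/8`
absorbs the cross term `2C₁²α²A`, which gives the energy inequality `f' + f/8 + D ≤ K` for
`f = a + 2C₁b`, the dissipation `D = (A - a)/2 + C₁(B - b) ≥ 0` and `K = C(1 + 2C₁)`.
With the integrating factor, `e^{s/8}(f/8 - K)` is nonincreasing, and since `f(0) = f(T)` while
`e^{T/8} > 1`, its initial value is `≤ 0`; hence `f ≤ 8K` throughout. Integrating the energy
inequality over one period removes `f'`, so `∫ D ≤ KT`, and `A + B` is bounded pointwise by a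
combination of `D` and `f`.
-/

theorem antitoneOn_exp_mul_of_deriv_add_mul_le {f f' : ℝ → ℝ} {a b c M : ℝ} (hc : 0 ≤ c)
    (hf : ContinuousOn f (Icc a b)) (hderiv : ∀ s ∈ Ioo a b, HasDerivAt f (f' s) s)
    (hle : ∀ s ∈ Ioo a b, f' s + c * f s ≤ M) :
    AntitoneOn (fun s => exp (c * s) * (c * f s - M)) (Icc a b) := by
  refine antitoneOn_of_hasDerivWithinAt_nonpos (convex_Icc a b)
    ((continuous_exp.comp (continuous_const_mul c)).continuousOn.mul
      ((hf.const_smul c).sub continuousOn_const))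
    (f' := fun s => c * exp (c * s) * (f' s + c * f s - M)) ?_ ?_ <;>
    rw [interior_Icc] <;> intro s hs
  · have hprod := ((hasDerivAt_id' s).const_mul c).exp.fun_mul
      (((hderiv s hs).const_mul c).sub_const M)
    refine (hprod.congr_deriv ?_).hasDerivWithinAt
    ring
  · exact mul_nonpos_of_nonneg_of_nonpos (by positivity) (by linarith [hle s hs])

theorem mul_le_of_periodic_of_deriv_add_mul_le {f f' : ℝ → ℝ} {a b c M : ℝ} (hab : a < b)
    (hc : 0 < c) (hf : ContinuousOn f (Icc a b)) (hderiv : ∀ s ∈ Ioo a b, HasDerivAt f (f' s) s)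
    (hle : ∀ s ∈ Ioo a b, f' s + c * f s ≤ M) (hper : f a = f b) :
    ∀ s ∈ Icc a b, c * f s ≤ M := by
  have hanti := antitoneOn_exp_mul_of_deriv_add_mul_le hc.le hf hderiv hle
  have hstart : c * f a - M ≤ 0 := by
    have hperiod := hanti (left_mem_Icc.2 hab.le) (right_mem_Icc.2 hab.le) hab.le
    have hexp : exp (c * a) < exp (c * b) := exp_lt_exp.2 (by nlinarith)
    simp only [← hper] at hperiod
    nlinarith
  intro s hs
  have hmono := hanti (left_mem_Icc.2 (hs.1.trans hs.2)) hs hs.1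
  have : exp (c * s) * (c * f s - M) ≤ 0 :=
    hmono.trans (mul_nonpos_of_nonneg_of_nonpos (exp_pos _).le hstart)
  linarith [nonpos_of_mul_nonpos_right this (exp_pos _)]

theorem integral_le_of_periodic_of_deriv_add_le {f f' D : ℝ → ℝ} {a b M : ℝ} (hab : a ≤ b)
    (hf : ContinuousOn f (Icc a b)) (hderiv : ∀ s ∈ Ioo a b, HasDerivAt f (f' s) s)
    (hD : IntervalIntegrable D MeasureTheory.volume a b)
    (hle : ∀ s ∈ Ioo a b, f' s + D s ≤ M) (hper : f a = f b) :
    ∫ s in a..b, D s ≤ M * (b - a) := by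
  have hMD : IntervalIntegrable (fun s => M - D s) MeasureTheory.volume a b :=
    intervalIntegrable_const.sub hD
  have hFTC := sub_le_integral_of_hasDeriv_right_of_le hab hf
    (fun s hs => (hderiv s hs).hasDerivWithinAt)
    ((intervalIntegrable_iff_integrableOn_Icc_of_le hab).1 hMD)
    (fun s hs => le_sub_iff_add_le.2 (hle s hs))
  rw [hper, sub_self, integral_sub intervalIntegrable_const hD, integral_const, smul_eq_mul]
    at hFTC
  linarith

theorem integral_le_of_le_mul_add {g D : ℝ → ℝ} {a b p q I : ℝ} (hab : a ≤ b) (hp : 0 ≤ p)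
    (hg : IntervalIntegrable g MeasureTheory.volume a b)
    (hD : IntervalIntegrable D MeasureTheory.volume a b)
    (hle : ∀ s ∈ Icc a b, g s ≤ p * D s + q) (hDI : ∫ s in a..b, D s ≤ I) :
    ∫ s in a..b, g s ≤ p * I + q * (b - a) :=
  calc ∫ s in a..b, g s
      ≤ ∫ s in a..b, (p * D s + q) :=
        integral_mono_on hab hg ((hD.const_mul p).add intervalIntegrable_const) hle
    _ = p * (∫ s in a..b, D s) + q * (b - a) := by
        rw [integral_add (hD.const_mul p) intervalIntegrable_const, integral_const_mul,
          integral_const, smul_eq_mul, mul_comm (b - a)]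
    _ ≤ p * I + q * (b - a) := by gcongr

theorem coupled_energy_ineq {a b a' b' A B C C₁ α : ℝ} (hC₁ : 0 < C₁)
    (hsmall : 2 * C₁ ^ 2 * α ^ 2 ≤ 1 / 8) (ha : 0 ≤ a) (hb : 0 ≤ b) (haA : a ≤ A)
    (hineq_a : a' + A ≤ C + C₁ * B) (hineq_b : b' + B ≤ C + C₁ * α ^ 2 * A) :
    (a' + 2 * C₁ * b') + (1/8) * (a + 2 * C₁ * b) + (1/2) * (A - a) + C₁ * (B - b)
      ≤ C * (1 + 2 * C₁) := by
  have hcoupling : 2 * C₁ ^ 2 * α ^ 2 * A ≤ (1/8) * A :=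
    mul_le_mul_of_nonneg_right hsmall (ha.trans haA)
  nlinarith [mul_nonneg hC₁.le hb]

theorem add_le_of_dissipation {a b A B C₁ K : ℝ} (hC₁ : 0 < C₁) (ha : 0 ≤ a) (hb : 0 ≤ b)
    (haA : a ≤ A) (hbB : b ≤ B) (hf : a + 2 * C₁ * b ≤ 8 * K) :
    A + B ≤ (2 + 1 / C₁) * ((1/2) * (A - a) + C₁ * (B - b)) + (8 + 4 / C₁) * K := by
  have hb' : b ≤ 4 * K / C₁ := by
    rw [le_div_iff₀ hC₁]
    linarith
  have hAa : 0 ≤ (A - a) / (2 * C₁) := div_nonneg (by linarith) (by positivity)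
  have hBb : 0 ≤ 2 * C₁ * (B - b) := mul_nonneg (by positivity) (by linarith)
  have : 0 ≤ C₁ * b := mul_nonneg hC₁.le hb
  calc A + B ≤ (A - a) + (B - b) + 2 * C₁ * (B - b) + (A - a) / (2 * C₁)
        + (8 * K + 4 * K / C₁) := by linarith
    _ = _ := by field_simp; ring

theorem apriori_differential_inequality_general
    (T C C₁ α : ℝ) (hT : 0 < T) (hC₁ : 0 < C₁)
    (hsmall : 2 * C₁ ^ 2 * α ^ 2 ≤ 1 / 8)
    (a b a' b' A B : ℝ → ℝ)
    (ha_nonneg : ∀ s ∈ Icc (0 : ℝ) T, 0 ≤ a s)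
    (hb_nonneg : ∀ s ∈ Icc (0 : ℝ) T, 0 ≤ b s)
    (haA : ∀ s ∈ Icc (0 : ℝ) T, a s ≤ A s)
    (hbB : ∀ s ∈ Icc (0 : ℝ) T, b s ≤ B s)
    (ha_cont : ContinuousOn a (Icc 0 T)) (hb_cont : ContinuousOn b (Icc 0 T))
    (ha_deriv : ∀ s ∈ Ioo (0 : ℝ) T, HasDerivAt a (a' s) s)
    (hb_deriv : ∀ s ∈ Ioo (0 : ℝ) T, HasDerivAt b (b' s) s)
    (hA_int : IntervalIntegrable A MeasureTheory.volume 0 T)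
    (hB_int : IntervalIntegrable B MeasureTheory.volume 0 T)
    (hineq_a : ∀ s ∈ Ioo (0 : ℝ) T, a' s + A s ≤ C + C₁ * B s)
    (hineq_b : ∀ s ∈ Ioo (0 : ℝ) T, b' s + B s ≤ C + C₁ * α ^ 2 * A s)
    (hper_a : a 0 = a T) (hper_b : b 0 = b T) :
    (∀ s ∈ Ioo (0 : ℝ) T,
      (a' s + 2 * C₁ * b' s) + (1/8) * (a s + 2 * C₁ * b s)
        + (1/2) * (A s - a s) + C₁ * (B s - b s) ≤ C * (1 + 2 * C₁))
    ∧ (∀ s ∈ Icc (0 : ℝ) T, a s + 2 * C₁ * b s ≤ 8 * (C * (1 + 2 * C₁)))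
    ∧ (∫ s in (0 : ℝ)..T, (A s + B s)) ≤ (10 + 5 / C₁) * (C * (1 + 2 * C₁)) * T := by
  set K := C * (1 + 2 * C₁)
  set D : ℝ → ℝ := fun s => (1/2) * (A s - a s) + C₁ * (B s - b s)
  have hD_nonneg : ∀ s ∈ Icc (0 : ℝ) T, 0 ≤ D s := fun s hs => by
    have := haA s hs; have := hbB s hs; positivity
  have henergy : ∀ s ∈ Ioo (0 : ℝ) T,
      (a' s + 2 * C₁ * b' s) + (1/8) * (a s + 2 * C₁ * b s) + D s ≤ K := fun s hs => by
    have hs' := Ioo_subset_Icc_self hs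
    simpa only [D, add_assoc] using coupled_energy_ineq hC₁ hsmall (ha_nonneg s hs')
      (hb_nonneg s hs') (haA s hs') (hineq_a s hs) (hineq_b s hs)
  have hf_cont : ContinuousOn (fun s => a s + 2 * C₁ * b s) (Icc 0 T) :=
    ha_cont.add (hb_cont.const_smul (2 * C₁))
  have hf_deriv : ∀ s ∈ Ioo (0 : ℝ) T,
      HasDerivAt (fun s => a s + 2 * C₁ * b s) (a' s + 2 * C₁ * b' s) s := fun s hs =>
    (ha_deriv s hs).add ((hb_deriv s hs).const_mul (2 * C₁))
  have hf_per : a 0 + 2 * C₁ * b 0 = a T + 2 * C₁ * b T := by rw [hper_a, hper_b]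
  have hsup : ∀ s ∈ Icc (0 : ℝ) T, a s + 2 * C₁ * b s ≤ 8 * K := fun s hs => by
    have := mul_le_of_periodic_of_deriv_add_mul_le (M := K) hT (by norm_num : (0 : ℝ) < 1 / 8)
      hf_cont hf_deriv
      (fun s hs => by linarith [henergy s hs, hD_nonneg s (Ioo_subset_Icc_self hs)]) hf_per s hs
    linarith
  have hD_int : IntervalIntegrable D MeasureTheory.volume 0 T :=
    ((hA_int.sub (ha_cont.intervalIntegrable_of_Icc hT.le)).const_mul _).add
      ((hB_int.sub (hb_cont.intervalIntegrable_of_Icc hT.le)).const_mul _)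
  have hD_le : ∫ s in (0 : ℝ)..T, D s ≤ K * (T - 0) :=
    integral_le_of_periodic_of_deriv_add_le hT.le hf_cont hf_deriv hD_int
      (fun s hs => by
        have := ha_nonneg s (Ioo_subset_Icc_self hs); have := hb_nonneg s (Ioo_subset_Icc_self hs)
        nlinarith [henergy s hs]) hf_per
  refine ⟨fun s hs => by simpa only [D, add_assoc] using henergy s hs, hsup, ?_⟩
  calc ∫ s in (0 : ℝ)..T, (A s + B s)
      ≤ (2 + 1 / C₁) * (K * (T - 0)) + (8 + 4 / C₁) * K * (T - 0) :=
        integral_le_of_le_mul_add hT.le (by positivity) (hA_int.add hB_int) hD_int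
          (fun s hs => add_le_of_dissipation hC₁ (ha_nonneg s hs) (hb_nonneg s hs) (haA s hs)
            (hbB s hs) (hsup s hs)) hD_le
    _ = (10 + 5 / C₁) * K * T := by ring

/-- Abstract differential-inequality lemma underlying the explicit a priori bound.
If `a' + A ≤ C + C₁B`, `b' + B ≤ C + C₁α²A` on `(0,T)` with `a ≤ A`, `b ≤ B`,
periodic boundary values, and `2C₁²α² ≤ 1/8`, then `f = a + 2C₁b` satisfies
`f' + (1/8)f + (1/2)(A−a) + C₁(B−b) ≤ C(1+2C₁)`, hence `sup f ≤ 8C(1+2C₁)` and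
`∫₀ᵀ (A+B) ≤ C'` with the explicit constant `C' = (10 + 5/C₁)·C(1+2C₁)·T`. -/
theorem apriori_differential_inequality
    (T C C₁ α : ℝ) (hT : 0 < T) (hC : 0 < C) (hC₁ : 0 < C₁) (hα : 0 < α)
    (hsmall : 2 * C₁ ^ 2 * α ^ 2 ≤ 1 / 8)
    (a b a' b' A B : ℝ → ℝ)
    (ha_nonneg : ∀ s ∈ Icc (0 : ℝ) T, 0 ≤ a s)
    (hb_nonneg : ∀ s ∈ Icc (0 : ℝ) T, 0 ≤ b s)
    (haA : ∀ s ∈ Icc (0 : ℝ) T, a s ≤ A s)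
    (hbB : ∀ s ∈ Icc (0 : ℝ) T, b s ≤ B s)
    (ha_cont : ContinuousOn a (Icc 0 T)) (hb_cont : ContinuousOn b (Icc 0 T))
    (ha_deriv : ∀ s ∈ Ioo (0 : ℝ) T, HasDerivAt a (a' s) s)
    (hb_deriv : ∀ s ∈ Ioo (0 : ℝ) T, HasDerivAt b (b' s) s)
    (hA_int : IntervalIntegrable A MeasureTheory.volume 0 T)
    (hB_int : IntervalIntegrable B MeasureTheory.volume 0 T)
    (hineq_a : ∀ s ∈ Ioo (0 : ℝ) T, a' s + A s ≤ C + C₁ * B s)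
    (hineq_b : ∀ s ∈ Ioo (0 : ℝ) T, b' s + B s ≤ C + C₁ * α ^ 2 * A s)
    (hper_a : a 0 = a T) (hper_b : b 0 = b T) :
    (∀ s ∈ Ioo (0 : ℝ) T,
      (a' s + 2 * C₁ * b' s) + (1/8) * (a s + 2 * C₁ * b s)
        + (1/2) * (A s - a s) + C₁ * (B s - b s) ≤ C * (1 + 2 * C₁))
    ∧ (∀ s ∈ Icc (0 : ℝ) T, a s + 2 * C₁ * b s ≤ 8 * (C * (1 + 2 * C₁)))
    ∧ (∫ s in (0 : ℝ)..T, (A s + B s)) ≤ (10 + 5 / C₁) * (C * (1 + 2 * C₁)) * T :=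
  apriori_differential_inequality_general T C C₁ α hT hC₁ hsmall a b a' b' A B ha_nonneg hb_nonneg
    haA hbB ha_cont hb_cont ha_deriv hb_deriv hA_int hB_int hineq_a hineq_b hper_a hper_b
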